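/- arXiv:2605.02840 — 4 statements merged into one kernel-verified Lean document; each statement's English description precedes it below -/
import Mathlib

section
/- In the one-time pad setting, if security holds (I(M:M') = 0) and correctness holds (I(M:M'|R) = S(M)) and the message is independent of the shared randomness (S(MR) = S(M) + S(R)), then S(M) = I(M:R|M'), and consequently S(R) ≥ S(M). -/
/-!
Security and correctness together with independence give `S(M'R) = S(MM'R)` and
`S(M) = S(MM') - S(M')`, which is `S(M) = I(M:R|M')`. Forgetting `R` cannot increase entropy,
so `S(MM') ≤ S(MM'R) = S(M'R)`, and subadditivity `S(M'R) ≤ S(M') + S(R)` yields `S(M) ≤ S(R)`.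
-/

open scoped BigOperators

noncomputable section

namespace OTP

/-- Shannon entropy (natural logarithm) of a distribution on a finite type. -/
def shEntropy {α : Type*} [Fintype α] (p : α → ℝ) : ℝ :=
  ∑ i, Real.negMulLog (p i)

variable {M M' R : Type*} [Fintype M] [Fintype M'] [Fintype R]

/-- Marginal on the message `M`. -/
def margM (p : M × M' × R → ℝ) : M → ℝ := fun m => ∑ m', ∑ r, p (m, m', r)

/-- Marginal on the ciphertext `M'`. -/
def margM' (p : M × M' × R → ℝ) : M' → ℝ := fun m' => ∑ m, ∑ r, p (m, m', r)

/-- Marginal on the shared key `R`. -/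
def margR (p : M × M' × R → ℝ) : R → ℝ := fun r => ∑ m, ∑ m', p (m, m', r)

/-- Joint marginal on `M, M'`. -/
def margMM' (p : M × M' × R → ℝ) : M × M' → ℝ := fun x => ∑ r, p (x.1, x.2, r)

/-- Joint marginal on `M, R`. -/
def margMR (p : M × M' × R → ℝ) : M × R → ℝ := fun x => ∑ m', p (x.1, m', x.2)

/-- Joint marginal on `M', R`. -/
def margM'R (p : M × M' × R → ℝ) : M' × R → ℝ := fun x => ∑ m, p (m, x.1, x.2)

open Real

lemma negMulLog_sum_le {ι : Type*} [Fintype ι] {f : ι → ℝ} (hf : ∀ i, 0 ≤ f i) :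
    negMulLog (∑ i, f i) ≤ ∑ i, negMulLog (f i) := by
  have hexpand : negMulLog (∑ i, f i) = ∑ i, -f i * log (∑ j, f j) := by
    rw [negMulLog, ← Finset.sum_mul, Finset.sum_neg_distrib]
  rw [hexpand]
  refine Finset.sum_le_sum fun i _ => ?_
  rcases (hf i).eq_or_lt with hi | hi
  · simp [← hi]
  · exact mul_le_mul_of_nonpos_left
      (log_le_log hi (Finset.single_le_sum (fun j _ => hf j) (Finset.mem_univ i)))
      (neg_nonpos.mpr hi.le)

lemma sum_negMulLog_le_sum_neg_mul_log {ι : Type*} [Fintype ι] {f g : ι → ℝ}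
    (hf : ∀ i, 0 ≤ f i) (hg : ∀ i, 0 ≤ g i) (hfg : ∀ i, g i = 0 → f i = 0)
    (hmass : ∑ i, f i = ∑ i, g i) :
    ∑ i, negMulLog (f i) ≤ ∑ i, -f i * log (g i) := by
  have hterm : ∀ i, negMulLog (f i) ≤ -f i * log (g i) + (g i - f i) := by
    intro i
    rcases (hf i).eq_or_lt with hfi | hfi
    · simp [← hfi, hg i]
    have hgi : 0 < g i := (hg i).lt_of_ne fun h => hfi.ne' (hfg i h.symm)
    have hlog := log_le_sub_one_of_pos (div_pos hgi hfi)
    rw [log_div hgi.ne' hfi.ne'] at hlog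
    have hscaled := mul_le_mul_of_nonneg_left hlog hfi.le
    rw [mul_sub_one, mul_div_cancel₀ _ hfi.ne'] at hscaled
    rw [negMulLog]
    linarith
  calc ∑ i, negMulLog (f i) ≤ ∑ i, (-f i * log (g i) + (g i - f i)) :=
        Finset.sum_le_sum fun i _ => hterm i
    _ = ∑ i, -f i * log (g i) := by
        rw [Finset.sum_add_distrib, Finset.sum_sub_distrib, hmass, sub_self, add_zero]

lemma shEntropy_comp_equiv {α β : Type*} [Fintype α] [Fintype β] (e : α ≃ β) (f : β → ℝ) :
    shEntropy (f ∘ e) = shEntropy f :=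
  e.sum_comp (fun b => negMulLog (f b))

lemma shEntropy_marginal_le {α β : Type*} [Fintype α] [Fintype β] {f : α × β → ℝ}
    (hf : ∀ x, 0 ≤ f x) :
    shEntropy (fun a => ∑ b, f (a, b)) ≤ shEntropy f := by
  rw [shEntropy, shEntropy, Fintype.sum_prod_type]
  exact Finset.sum_le_sum fun a _ => negMulLog_sum_le fun b => hf (a, b)

/-- Gibbs' inequality against the product of the marginals, whose cross entropy splits into
the two marginal entropies. -/
lemma shEntropy_le_add_marginals {α β : Type*} [Fintype α] [Fintype β] {f : α × β → ℝ}
    (hf : ∀ x, 0 ≤ f x) (hsum : ∑ x, f x = 1) :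
    shEntropy f ≤ shEntropy (fun a => ∑ b, f (a, b)) + shEntropy (fun b => ∑ a, f (a, b)) := by
  set fa : α → ℝ := fun a => ∑ b, f (a, b)
  set fb : β → ℝ := fun b => ∑ a, f (a, b)
  have hfa : ∀ x, f x ≤ fa x.1 := fun x =>
    Finset.single_le_sum (f := fun b => f (x.1, b)) (fun b _ => hf _) (Finset.mem_univ x.2)
  have hfb : ∀ x, f x ≤ fb x.2 := fun x =>
    Finset.single_le_sum (f := fun a => f (a, x.2)) (fun a _ => hf _) (Finset.mem_univ x.1)
  have hfa_sum : ∑ a, fa a = 1 := by rw [← hsum, Fintype.sum_prod_type]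
  have hfb_sum : ∑ b, fb b = 1 := by rw [← hsum, Fintype.sum_prod_type_right]
  have hgibbs := sum_negMulLog_le_sum_neg_mul_log (g := fun x : α × β => fa x.1 * fb x.2) hf
    (fun x => mul_nonneg ((hf x).trans (hfa x)) ((hf x).trans (hfb x)))
    (fun x hx => (mul_eq_zero.mp hx).elim
      (fun h => le_antisymm (h ▸ hfa x) (hf x)) (fun h => le_antisymm (h ▸ hfb x) (hf x)))
    (by rw [hsum, Fintype.sum_prod_type, ← Fintype.sum_mul_sum, hfa_sum, hfb_sum, one_mul])
  have hsplit : ∀ x, -f x * log (fa x.1 * fb x.2) = -f x * log (fa x.1) + -f x * log (fb x.2) := by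
    intro x
    rcases (hf x).eq_or_lt with hx | hx
    · simp [← hx]
    rw [log_mul (hx.trans_le (hfa x)).ne' (hx.trans_le (hfb x)).ne', mul_add]
  have hcross_fa : ∑ x : α × β, -f x * log (fa x.1) = shEntropy fa := by
    rw [Fintype.sum_prod_type]
    refine Finset.sum_congr rfl fun a _ => ?_
    dsimp only
    rw [← Finset.sum_mul, Finset.sum_neg_distrib]
    rfl
  have hcross_fb : ∑ x : α × β, -f x * log (fb x.2) = shEntropy fb := by
    rw [Fintype.sum_prod_type_right]
    refine Finset.sum_congr rfl fun b _ => ?_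
    dsimp only
    rw [← Finset.sum_mul, Finset.sum_neg_distrib]
    rfl
  simp only [hsplit, Finset.sum_add_distrib, hcross_fa, hcross_fb] at hgibbs
  exact hgibbs

lemma shEntropy_margMM'_le {p : M × M' × R → ℝ} (hp : ∀ v, 0 ≤ p v) :
    shEntropy (margMM' p) ≤ shEntropy p := by
  rw [← shEntropy_comp_equiv (Equiv.prodAssoc M M' R) p]
  exact shEntropy_marginal_le (f := p ∘ Equiv.prodAssoc M M' R) fun _ => hp _

lemma shEntropy_margM'R_le {p : M × M' × R → ℝ} (hp : ∀ v, 0 ≤ p v) (hsum : ∑ v, p v = 1) :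
    shEntropy (margM'R p) ≤ shEntropy (margM' p) + shEntropy (margR p) := by
  have hmarg_M' : (fun m' => ∑ r, margM'R p (m', r)) = margM' p :=
    funext fun _ => Finset.sum_comm
  have hmarg_R : (fun r => ∑ m', margM'R p (m', r)) = margR p :=
    funext fun _ => Finset.sum_comm
  have hsum' : ∑ x, margM'R p x = 1 := by
    rw [← hsum, Fintype.sum_prod_type p]
    exact Finset.sum_comm
  rw [← hmarg_M', ← hmarg_R]
  exact shEntropy_le_add_marginals (fun _ => Finset.sum_nonneg fun _ _ => hp _) hsum'

/-- In the one-time pad setting, if security holds (`I(M:M') = 0`),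
correctness holds (`I(M:M'|R) = S(M)`), and the message is independent of the shared
randomness (`S(MR) = S(M) + S(R)`), then `S(M) = I(M:R|M')`, and consequently
`S(R) ≥ S(M)`.  Here `I(A:B) = S(A) + S(B) - S(AB)` and
`I(A:B|C) = S(AC) + S(BC) - S(C) - S(ABC)`. -/
theorem one_time_pad_key_lower_bound
    (p : M × M' × R → ℝ) (hp : ∀ v, 0 ≤ p v) (hsum : ∑ v, p v = 1)
    (hsec : shEntropy (margM p) + shEntropy (margM' p) - shEntropy (margMM' p) = 0)
    (hcorr : shEntropy (margMR p) + shEntropy (margM'R p) - shEntropy (margR p)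
        - shEntropy p = shEntropy (margM p))
    (hind : shEntropy (margMR p) = shEntropy (margM p) + shEntropy (margR p)) :
    shEntropy (margM p)
        = shEntropy (margMM' p) + shEntropy (margM'R p) - shEntropy (margM' p)
          - shEntropy p
      ∧ shEntropy (margM p) ≤ shEntropy (margR p) := by
  have hM'R : shEntropy (margM'R p) = shEntropy p := by linarith
  refine ⟨by linarith, ?_⟩
  have hmono := shEntropy_margMM'_le hp
  have hsubadd := shEntropy_margM'R_le hp hsum
  linarith

end OTP
end
end

section
/- In port-based teleportation with N ports of local dimension d, the entanglement fidelity of the teleportation channel with the identity equals (N/d²) times the average success probability of distinguishing the N states σ^k with POVM {Λ^k}: F_e(T, I) = (N/d²)·(1/N) Σ_{k=1}^N tr(Λ^k σ^k), where σ^k = Ψ⁺_{A_k B'} ⊗ I_{Ā_k}/d^{N-1}. -/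
/-!
Feeding half of `Ψ⁺` into a map `T` and pairing the output with `Ψ⁺` gives
`F_e(T, I) = d⁻² ∑_{i,j} ⟨i| T(|i⟩⟨j|) |j⟩`. For the port-teleportation channel the
matrix element `⟨i| T(|i⟩⟨j|) |j⟩` is a sum over `k` of entries `Λ^k_{(a,j),(a',i)} σ^k_{(a',i),(a,j)}`,
and summing over `i, j` reassembles them into `∑ₖ tr (Λ^k σ^k)`.
-/

open scoped BigOperators ComplexOrder Matrix

noncomputable section

namespace QI

/-- The Hilbert space of the `N` ports, each of local dimension `d`. -/
abbrev Ports (N d : ℕ) := Fin N → Fin d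

/-- The states `σ^k = Ψ⁺_{A_k B'} ⊗ I_{Ā_k} / d^{N-1}` on `A × B'`, where
`A = A_1 ⋯ A_N` are the `N` ports. -/
def portState (N d : ℕ) (k : Fin N) :
    Matrix (Ports N d × Fin d) (Ports N d × Fin d) ℂ :=
  Matrix.of fun x y =>
    (if x.1 k = x.2 ∧ y.1 k = y.2 then ((d : ℂ))⁻¹ else 0) *
      (((d : ℂ) ^ (N - 1))⁻¹ * (if ∀ i, i ≠ k → x.1 i = y.1 i then 1 else 0))

/-- The port-teleportation channel
`T(σ_in) = ∑ₖ tr_{AA'} (Λ^k_{AA'} [σ^k_{AB'} ⊗ σ_in])`, written out entrywise on the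
output system `B'`. -/
def teleChannel (N d : ℕ)
    (Λ : Fin N → Matrix (Ports N d × Fin d) (Ports N d × Fin d) ℂ)
    (σin : Matrix (Fin d) (Fin d) ℂ) : Matrix (Fin d) (Fin d) ℂ :=
  Matrix.of fun b b' =>
    ∑ k, ∑ a : Ports N d, ∑ α : Fin d, ∑ a' : Ports N d, ∑ α' : Fin d,
      Λ k (a, α) (a', α') * portState N d k (a', b) (a, b') * σin α' α

/-- The projector onto the maximally entangled state on two `d`-dimensional systems. -/
def maxEntD (d : ℕ) : Matrix (Fin d × Fin d) (Fin d × Fin d) ℂ :=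
  Matrix.of fun p q => if p.1 = p.2 ∧ q.1 = q.2 then ((d : ℂ))⁻¹ else 0

/-- The entanglement fidelity of the teleportation channel with the identity channel,
`F_e(T, I) = tr (Ψ⁺_{CB'} (I_C ⊗ T)(Ψ⁺_{CA'}))`. -/
def entFidelity (N d : ℕ)
    (Λ : Fin N → Matrix (Ports N d × Fin d) (Ports N d × Fin d) ℂ) : ℝ :=
  (Matrix.trace (maxEntD d *
    Matrix.of fun p q : Fin d × Fin d =>
      teleChannel N d Λ
        (Matrix.of fun α α' => maxEntD d (p.1, α) (q.1, α')) p.2 q.2)).re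

lemma maxEntD_slice_eq_single (d : ℕ) (i j : Fin d) :
    (Matrix.of fun α α' => maxEntD d (i, α) (j, α')) = Matrix.single i j ((d : ℂ)⁻¹) := by
  ext α α'
  simp [maxEntD, Matrix.single]

lemma trace_maxEntD_mul (d : ℕ) (T : Matrix (Fin d) (Fin d) ℂ → Matrix (Fin d) (Fin d) ℂ) :
    Matrix.trace (maxEntD d *
      Matrix.of fun p q : Fin d × Fin d =>
        T (Matrix.of fun α α' => maxEntD d (p.1, α) (q.1, α')) p.2 q.2)
      = (d : ℂ)⁻¹ * ∑ i, ∑ j, T (Matrix.single i j ((d : ℂ)⁻¹)) i j := by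
  simp only [maxEntD_slice_eq_single]
  simp only [Matrix.trace, Matrix.diag, Matrix.mul_apply, maxEntD, Matrix.of_apply,
    Fintype.sum_prod_type, ite_and, ite_mul, zero_mul, Finset.sum_ite_eq, Finset.mem_univ,
    if_true, Finset.sum_ite_irrel, Finset.sum_const_zero, Finset.mul_sum]
  exact Finset.sum_comm

lemma teleChannel_single_apply (N d : ℕ)
    (Λ : Fin N → Matrix (Ports N d × Fin d) (Ports N d × Fin d) ℂ) (i j b b' : Fin d) (c : ℂ) :
    teleChannel N d Λ (Matrix.single i j c) b b'
      = c * ∑ k, ∑ a : Ports N d, ∑ a' : Ports N d,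
          Λ k (a, j) (a', i) * portState N d k (a', b) (a, b') := by
  simp only [teleChannel, Matrix.single, Matrix.of_apply, ite_and, mul_ite, mul_zero,
    Finset.sum_ite_eq, Finset.mem_univ, if_true, Finset.mul_sum]
  refine Finset.sum_congr rfl fun k _ => Finset.sum_congr rfl fun a _ => ?_
  simp only [Finset.sum_ite_irrel, Finset.sum_const_zero, Finset.sum_ite_eq, Finset.mem_univ,
    if_true]
  exact Finset.sum_congr rfl fun _ _ => by ring

lemma sum_teleChannel_single_apply (N d : ℕ)
    (Λ : Fin N → Matrix (Ports N d × Fin d) (Ports N d × Fin d) ℂ) (c : ℂ) :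
    ∑ i, ∑ j, teleChannel N d Λ (Matrix.single i j c) i j
      = c * ∑ k, Matrix.trace (Λ k * portState N d k) := by
  simp only [teleChannel_single_apply, ← Finset.mul_sum, Matrix.trace, Matrix.diag,
    Matrix.mul_apply, Fintype.sum_prod_type]
  congr 1
  -- reorder the sums over `i, j, k, a, a'` into `k, a, j, a', i`
  conv_lhs => enter [2, i]; rw [Finset.sum_comm]
  rw [Finset.sum_comm]
  refine Finset.sum_congr rfl fun k _ => ?_
  conv_lhs => enter [2, i]; rw [Finset.sum_comm]
  rw [Finset.sum_comm]
  refine Finset.sum_congr rfl fun a _ => ?_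
  rw [Finset.sum_comm]
  refine Finset.sum_congr rfl fun j _ => Finset.sum_comm

lemma entFidelity_eq_sum_trace (N d : ℕ)
    (Λ : Fin N → Matrix (Ports N d × Fin d) (Ports N d × Fin d) ℂ) :
    entFidelity N d Λ = ((d : ℝ) ^ 2)⁻¹ * ∑ k, (Matrix.trace (Λ k * portState N d k)).re := by
  rw [entFidelity, trace_maxEntD_mul, sum_teleChannel_single_apply, ← mul_assoc, ← mul_inv,
    ← sq]
  have hcast : ((d : ℂ) ^ 2)⁻¹ = (((d : ℝ) ^ 2)⁻¹ : ℝ) := by push_cast; rfl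
  rw [hcast, Complex.re_ofReal_mul, Complex.re_sum]

theorem port_teleportation_entanglement_fidelity_general (N d : ℕ)
    (Λ : Fin N → Matrix (Ports N d × Fin d) (Ports N d × Fin d) ℂ) :
    entFidelity N d Λ
      = ((N : ℝ) / (d : ℝ) ^ 2) *
        ((N : ℝ)⁻¹ * ∑ k, (Matrix.trace (Λ k * portState N d k)).re) := by
  rw [entFidelity_eq_sum_trace]
  rcases N.eq_zero_or_pos with rfl | hN
  · simp
  · rw [div_eq_inv_mul, mul_assoc, mul_inv_cancel_left₀ (by positivity)]

/-- In port-based teleportation with `N` ports of local dimension `d`,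
the entanglement fidelity of the teleportation channel with the identity equals
`(N/d²)` times the average success probability of distinguishing the `N` states `σ^k`
with the POVM `{Λ^k}`:
`F_e(T, I) = (N/d²) · (1/N) ∑ₖ tr (Λ^k σ^k)`. -/
theorem port_teleportation_entanglement_fidelity (N d : ℕ)
    (Λ : Fin N → Matrix (Ports N d × Fin d) (Ports N d × Fin d) ℂ)
    (hpos : ∀ k, (Λ k).PosSemidef) (hsum : ∑ k, Λ k = 1) :
    entFidelity N d Λ
      = ((N : ℝ) / (d : ℝ) ^ 2) *
        ((N : ℝ)⁻¹ * ∑ k, (Matrix.trace (Λ k * portState N d k)).re) :=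
  port_teleportation_entanglement_fidelity_general N d Λ

end QI
end
end

section
/- Garden-hose parity composition: the garden-hose complexity of the XOR of Boolean functions satisfies GH(⊕_i f_i) ≤ 4 Σ_i GH(f_i). -/
/-!
Fix a protocol `Q` for `f`. Four copies of `Q` form a gadget with two entry and two exit ports
on Alice's side. Water entering at the port for parity `c` runs through a forward copy of `Q`.
Where `Q` would spill on Alice's side, Alice hoses it into a copy of `Q` run backwards, leading
to the exit for parity `c`; where `Q` would spill on Bob's side, Bob hoses it into the backward
copy leading to the exit for parity `!c`. Since both players' hosings are involutions, the walk
is reversible, so a backward copy retraces the path of `Q` to its start, the end that Alice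
hoses to the tap: a position Alice knows. Chaining the gadgets of `f₁, …, f_k` and hosing the
final exit for parity `true` into a pipe that Bob leaves open gives a protocol with
`4 ∑ GH(fᵢ)` pipes; the open pipe is taken from the forward copy for parity `true` of a gadget
that is only ever entered with parity `false`.
-/

open scoped BigOperators

namespace GardenHose

/-- The deterministic walk of the water through a garden-hose configuration, with fuel.
`a` is Alice's pairing of the ends on her side (`none` is the tap, `some p` her end of
pipe `p`; ends fixed by `a` are unconnected), and `b` is Bob's pairing of his pipe ends.
The walk is called at an Alice-side end `e` about to traverse Alice's hose there.
The result `Sum.inl e'` means the water spills on Alice's side at end `e'`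
(`Sum.inl none` means it spills at the tap), and `Sum.inr p` means it spills on Bob's
side at his end of pipe `p`. -/
def walk {m : ℕ} (a : Option (Fin m) → Option (Fin m)) (b : Fin m → Fin m) :
    ℕ → Option (Fin m) → Option (Fin m) ⊕ Fin m
  | 0, e => Sum.inl e
  | n + 1, e =>
    if a e = e then Sum.inl e
    else
      match a e with
      | none => Sum.inl none
      | some p => if b p = p then Sum.inr p else walk a b n (some (b p))

/-- A garden-hose protocol with `m` pipes: for each of her inputs `x`, Alice connects
the ends on her side (her ends of the pipes together with the tap) in pairs with hoses,
and for each of his inputs `y`, Bob connects his ends of the pipes in pairs; the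
pairings are recorded as involutions, whose fixed points are the unconnected ends. -/
structure Protocol (X Y : Type*) (m : ℕ) where
  alice : X → Option (Fin m) → Option (Fin m)
  bob : Y → Fin m → Fin m
  alice_inv : ∀ x, Function.Involutive (alice x)
  bob_inv : ∀ y, Function.Involutive (bob y)

/-- The end at which the water spills, on inputs `x, y`: water enters at the tap and
follows the pipes and hoses.  (The fuel `2 * m + 2` is enough for the walk, which never
traverses a pipe twice, to terminate.) -/
def Protocol.spill {X Y : Type*} {m : ℕ} (P : Protocol X Y m) (x : X) (y : Y) :
    Option (Fin m) ⊕ Fin m :=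
  walk (P.alice x) (P.bob y) (2 * m + 2) none

/-- `P` computes `f` in the garden-hose model: on inputs `(x, y)` the water spills on
Bob's side iff `f x y = true` (equivalently, on Alice's side iff `f x y = false`). -/
def Protocol.Computes {X Y : Type*} {m : ℕ} (P : Protocol X Y m)
    (f : X → Y → Bool) : Prop :=
  ∀ x y, (P.spill x y).isRight = f x y

/-- The garden-hose complexity of `f`: the minimal number of pipes of a garden-hose
protocol computing `f`. -/
noncomputable def GH {X Y : Type*} [Fintype X] [Fintype Y] (f : X → Y → Bool) : ℕ :=
  sInf {m | ∃ P : Protocol X Y m, P.Computes f}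

open Function Relation

section Step

variable {ι : Type*} {a : Option ι → Option ι} {b : ι → ι}

variable (a b) in
/-- From Alice's end `e`, the water takes her hose into pipe `p`, then Bob's hose from `p` back
along pipe `b p` to Alice's end of it. -/
def Step (e e' : Option ι) : Prop :=
  ∃ p, a e = some p ∧ a e ≠ e ∧ b p ≠ p ∧ e' = some (b p)

variable (a b) in
/-- The water at Alice's end `E` spills on Alice's side (`false`) or on Bob's side (`true`). -/
def Spills (E : Option ι) : Bool → Prop
  | false => a E = E
  | true => ∃ p, a E = some p ∧ a E ≠ E ∧ b p = p

theorem Step.right_unique : Relator.RightUnique (Step a b) := by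
  rintro e _ _ ⟨p, hp, -, -, rfl⟩ ⟨q, hq, -, -, rfl⟩
  rw [Option.some_inj.mp (hp.symm.trans hq)]

theorem Step.left_unique (ha : Involutive a) (hb : Involutive b) {e₁ e₂ e' : Option ι}
    (h₁ : Step a b e₁ e') (h₂ : Step a b e₂ e') : e₁ = e₂ := by
  obtain ⟨p, hp, -, -, rfl⟩ := h₁
  obtain ⟨q, hq, -, -, he⟩ := h₂
  obtain rfl : q = p := hb.injective (Option.some_inj.mp he).symm
  rw [← ha e₁, hp, ← hq, ha]

theorem Step.of_agree {a' : Option ι → Option ι} (h : ∀ e, a e ≠ e → a' e = a e)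
    {e e' : Option ι} (hs : Step a b e e') : Step a' b e e' := by
  obtain ⟨p, hp, hne, hbp, rfl⟩ := hs
  exact ⟨p, h e hne ▸ hp, h e hne ▸ hne, hbp, rfl⟩

theorem not_step_none {e : Option ι} : ¬Step a b e none := by
  rintro ⟨p, -, -, -, h⟩
  cases h

theorem Step.symm (ha : Involutive a) (hb : Involutive b) {e e' : Option ι}
    (h : Step a b e e') (h' : a e' ≠ e') : Step a b (a e') (a e) := by
  obtain ⟨p, hp, -, hbp, rfl⟩ := h
  exact ⟨b p, by rw [ha], by rw [ha]; exact h'.symm, by rwa [hb, ne_comm], by rw [hb, hp]⟩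

theorem reflTransGen_step_symm (ha : Involutive a) (hb : Involutive b) {u v : Option ι}
    (h : ReflTransGen (Step a b) u v) (hv : a v ≠ v) :
    ReflTransGen (Step a b) (a v) (a u) := by
  induction h using ReflTransGen.head_induction_on with
  | refl => exact .refl
  | head hst hrest ih =>
    rename_i t
    have ht : a t ≠ t := by
      rcases hrest.cases_head with rfl | ⟨_, ⟨_, _, hne, _⟩, _⟩
      exacts [hv, hne]
    exact ih.tail (hst.symm ha hb ht)

theorem Spills.not_step {E e : Option ι} {v : Bool} (hE : Spills a b E v) :
    ¬Step a b E e := by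
  rintro ⟨p, hp, hne, hbp, -⟩
  cases v
  · exact hne hE
  · obtain ⟨q, hq, -, hbq⟩ := hE
    exact hbp (Option.some_inj.mp (hp.symm.trans hq) ▸ hbq)

theorem Spills.unique {E : Option ι} {v w : Bool} (hv : Spills a b E v) (hw : Spills a b E w) :
    v = w := by
  cases v <;> cases w <;> try rfl
  · obtain ⟨_, _, hne, _⟩ := hw
    exact absurd hv hne
  · obtain ⟨_, _, hne, _⟩ := hv
    exact absurd hw hne

theorem Spills.unique_of_reaches {E E' : Option ι} {v w : Bool}
    (hE : ReflTransGen (Step a b) none E) (hv : Spills a b E v)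
    (hE' : ReflTransGen (Step a b) none E') (hw : Spills a b E' w) : v = w := by
  suffices E = E' by subst this; exact hv.unique hw
  rcases hE.total_of_right_unique Step.right_unique hE' with h | h
  · exact h.cases_head.resolve_right fun ⟨_, hs, _⟩ => hv.not_step hs
  · exact (h.cases_head.resolve_right fun ⟨_, hs, _⟩ => hw.not_step hs).symm

theorem _root_.Relation.ReflTransGen.exists_seq {α : Type*} {r : α → α → Prop} {s e : α}
    (h : ReflTransGen r s e) :
    ∃ (n : ℕ) (W : ℕ → α), W 0 = s ∧ W n = e ∧ ∀ i < n, r (W i) (W (i + 1)) := by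
  induction h with
  | refl => exact ⟨0, fun _ => s, rfl, rfl, by simp⟩
  | @tail u e' _ hr ih =>
    obtain ⟨n, W, hW0, hWn, hW⟩ := ih
    refine ⟨n + 1, fun i => if i ≤ n then W i else e', by simp [hW0], by simp, fun i hi => ?_⟩
    rcases (Nat.lt_succ_iff.mp hi).lt_or_eq with hin | rfl
    · simpa [hin.le, Nat.succ_le_of_lt hin] using hW i hin
    · simpa [hWn] using hr

/-- The water never returns to the tap: the path from the tap would be a palindrome under
`a`, and its middle would be a hose or pipe joined to itself. -/
theorem eq_none_of_reaches_of_apply_eq_none (ha : Involutive a) (hb : Involutive b)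
    {E : Option ι} (h : ReflTransGen (Step a b) none E) (hE : a E = none) : E = none := by
  by_contra hEn
  obtain ⟨n, W, hW0, hWn, hW⟩ := h.exists_seq
  have palindrome : ∀ i, 2 * i ≤ n → a (W i) = W (n - i) := by
    intro i
    induction i with
    | zero => intro; rw [hW0, Nat.sub_zero, hWn, ← hE, ha]
    | succ i ih =>
      intro hi
      obtain ⟨p, hp, -, -, hWi⟩ := hW i (by omega)
      obtain ⟨r, hr, -, -, hWr⟩ := hW (n - i - 1) (by omega)
      rw [show n - i - 1 + 1 = n - i by omega, ← ih (by omega), hp,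
        Option.some_inj] at hWr
      rw [show n - (i + 1) = n - i - 1 by omega, ← ha (W (n - i - 1)), hr, hWi, hWr, hb]
  obtain ⟨i, rfl | rfl⟩ := Nat.even_or_odd' n
  · rcases Nat.eq_zero_or_pos i with rfl | hi
    · exact hEn (hWn.symm.trans hW0)
    · obtain ⟨p, -, hne, -⟩ := hW i (by omega)
      exact hne (by simpa [two_mul] using palindrome i (by omega))
  · obtain ⟨p, hp, -, hbp, hWi⟩ := hW i (by omega)
    have := palindrome i (by omega)
    rw [show 2 * i + 1 - i = i + 1 by omega, hp, hWi, Option.some_inj] at this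
    exact hbp this.symm

end Step

section Trajectory

variable {ι : Type*} {a : Option ι → Option ι} {b : ι → ι}

open Classical in
variable (a b) in
/-- The end the water is at after `n` steps from the tap, or `none` once it has spilled. -/
noncomputable def traj : ℕ → Option (Option ι)
  | 0 => some none
  | n + 1 => (traj n).bind fun e => if h : ∃ e', Step a b e e' then some h.choose else none

theorem traj_succ_eq_some {n : ℕ} {e' : Option ι} :
    traj a b (n + 1) = some e' ↔ ∃ e, traj a b n = some e ∧ Step a b e e' := by
  simp only [traj, Option.bind_eq_some_iff]
  refine exists_congr fun e => and_congr_right fun _ => ?_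
  split_ifs with h
  · exact ⟨fun h' => Option.some_inj.mp h' ▸ h.choose_spec,
      fun h' => congrArg some (Step.right_unique h.choose_spec h')⟩
  · exact ⟨nofun, fun h' => (h ⟨e', h'⟩).elim⟩

theorem reaches_of_traj {n : ℕ} {e : Option ι} (h : traj a b n = some e) :
    ReflTransGen (Step a b) none e := by
  induction n generalizing e with
  | zero => cases h; exact .refl
  | succ n ih =>
    obtain ⟨e₀, h₀, hs⟩ := traj_succ_eq_some.mp h
    exact (ih h₀).tail hs

theorem traj_ne_of_lt (ha : Involutive a) (hb : Involutive b) {i j : ℕ} (hij : i < j)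
    {e : Option ι} (hj : traj a b j = some e) : traj a b i ≠ some e := by
  induction i generalizing j e with
  | zero =>
    obtain ⟨j, rfl⟩ := Nat.exists_eq_add_of_lt hij
    obtain ⟨_, -, hs⟩ := traj_succ_eq_some.mp hj
    rintro ⟨⟩
    exact not_step_none hs
  | succ i ih =>
    obtain ⟨j, rfl⟩ := Nat.exists_eq_add_of_lt hij
    obtain ⟨e₁, h₁, hs₁⟩ := traj_succ_eq_some.mp hj
    intro hi
    obtain ⟨e₀, h₀, hs₀⟩ := traj_succ_eq_some.mp hi
    exact ih (by omega) h₁ (h₀.trans (congrArg some (hs₀.left_unique ha hb hs₁)))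

/-- Pigeonhole: a trajectory with no spill would visit `card ι + 2` distinct ends. -/
theorem exists_traj_stuck [Fintype ι] (ha : Involutive a) (hb : Involutive b) :
    ∃ n ≤ Fintype.card ι, ∃ E, traj a b n = some E ∧ ∀ e, ¬Step a b E e := by
  by_contra! hcon
  have alive : ∀ n ≤ Fintype.card ι + 1, ∃ e, traj a b n = some e := by
    intro n
    induction n with
    | zero => exact fun _ => ⟨none, rfl⟩
    | succ n ih =>
      intro hn
      obtain ⟨e, he⟩ := ih (by omega)
      obtain ⟨e', he'⟩ := hcon n (by omega) e he
      exact ⟨e', traj_succ_eq_some.mpr ⟨e, he, he'⟩⟩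
  choose W hW using fun i : Fin (Fintype.card ι + 2) => alive i (by omega)
  obtain ⟨i, j, hne, hij⟩ := Fintype.exists_ne_map_eq_of_card_lt W (by simp)
  rcases lt_or_gt_of_ne (Fin.val_injective.ne hne) with hlt | hlt
  · exact traj_ne_of_lt ha hb hlt (hW j) (hij ▸ hW i)
  · exact traj_ne_of_lt ha hb hlt (hW i) (hij ▸ hW j)

end Trajectory

section Walk

variable {m : ℕ} {a : Option (Fin m) → Option (Fin m)} {b : Fin m → Fin m}

theorem walk_succ_of_step {n : ℕ} {e e' : Option (Fin m)} (h : Step a b e e') :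
    walk a b (n + 1) e = walk a b n e' := by
  obtain ⟨p, hp, hne, hbp, rfl⟩ := h
  simp [walk, hp, hbp, (hp ▸ hne : some p ≠ e)]

theorem walk_add_of_traj {n k : ℕ} {e : Option (Fin m)} (h : traj a b n = some e) :
    walk a b (n + k) none = walk a b k e := by
  induction n generalizing e k with
  | zero => cases h; simp
  | succ n ih =>
    obtain ⟨e₀, h₀, hs⟩ := traj_succ_eq_some.mp h
    rw [Nat.add_right_comm, Nat.add_assoc, ih h₀, walk_succ_of_step hs]

theorem spills_walk_of_stuck {E : Option (Fin m)} (hstuck : ∀ e, ¬Step a b E e)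
    (hE : a E = none → E = none) (n : ℕ) : Spills a b E (walk a b (n + 1) E).isRight := by
  by_cases hfix : a E = E
  · rw [show walk a b (n + 1) E = .inl E by simp [walk, hfix]]
    exact hfix
  rcases hp : a E with _ | p
  · exact absurd (hE hp ▸ hp) (hE hp ▸ hfix)
  by_cases hbp : b p = p
  · rw [show walk a b (n + 1) E = .inr p by simp [walk, hp, hbp, (hp ▸ hfix : some p ≠ E)]]
    exact ⟨p, hp, hfix, hbp⟩
  · exact (hstuck _ ⟨p, hp, hfix, hbp, rfl⟩).elim

theorem exists_reaches_spills_walk (ha : Involutive a) (hb : Involutive b) :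
    ∃ E, ReflTransGen (Step a b) none E ∧
      Spills a b E (walk a b (2 * m + 2) none).isRight := by
  obtain ⟨n, hn, E, hE, hstuck⟩ := exists_traj_stuck ha hb
  rw [Fintype.card_fin] at hn
  have hreach := reaches_of_traj hE
  refine ⟨E, hreach, ?_⟩
  rw [show 2 * m + 2 = n + ((2 * m + 1 - n) + 1) by omega, walk_add_of_traj hE]
  exact spills_walk_of_stuck hstuck (eq_none_of_reaches_of_apply_eq_none ha hb hreach) _

end Walk

structure Network (X Y ι : Type*) where
  alice : X → Option ι → Option ι
  bob : Y → ι → ι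
  alice_inv : ∀ x, Involutive (alice x)
  bob_inv : ∀ y, Involutive (bob y)

namespace Network

variable {X Y ι κ : Type*}

def Computes (N : Network X Y ι) (f : X → Y → Bool) : Prop :=
  ∀ x y, ∃ E, ReflTransGen (Step (N.alice x) (N.bob y)) none E ∧
    Spills (N.alice x) (N.bob y) E (f x y)

theorem Computes.eq_false_of_alice_none {N : Network X Y ι} {f : X → Y → Bool}
    (hN : N.Computes f) {x : X} (hx : N.alice x none = none) (y : Y) : f x y = false := by
  obtain ⟨E, hE, hspill⟩ := hN x y
  obtain rfl := (reflTransGen_iff_eq fun e ⟨_, hp, _⟩ => by simp [hx] at hp).mp hE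
  cases h : f x y
  · rfl
  · rw [h] at hspill
    obtain ⟨p, hp, -⟩ := hspill
    simp [hx] at hp

def relabel (N : Network X Y ι) (σ : ι ≃ κ) : Network X Y κ where
  alice x := Option.map σ ∘ N.alice x ∘ Option.map σ.symm
  bob y := σ ∘ N.bob y ∘ σ.symm
  alice_inv x e := by simp [Option.map_map, N.alice_inv x _]
  bob_inv y p := by simp [N.bob_inv y _]

@[simp] theorem relabel_alice (N : Network X Y ι) (σ : ι ≃ κ) (x : X) (e : Option ι) :
    (N.relabel σ).alice x (e.map σ) = (N.alice x e).map σ := by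
  simp [relabel, Option.map_map]

@[simp] theorem relabel_bob (N : Network X Y ι) (σ : ι ≃ κ) (y : Y) (p : ι) :
    (N.relabel σ).bob y (σ p) = σ (N.bob y p) := by
  simp [relabel]

theorem step_relabel (N : Network X Y ι) (σ : ι ≃ κ) {x : X} {y : Y} {e e' : Option ι}
    (h : Step (N.alice x) (N.bob y) e e') :
    Step ((N.relabel σ).alice x) ((N.relabel σ).bob y) (e.map σ) (e'.map σ) := by
  obtain ⟨p, hp, hne, hbp, rfl⟩ := h
  refine ⟨σ p, ?_, ?_, ?_, ?_⟩ <;> simp [hp, hbp]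
  exact fun h => hne (Option.map_injective σ.injective (by simpa [hp] using h))

theorem spills_relabel (N : Network X Y ι) (σ : ι ≃ κ) {x : X} {y : Y} {E : Option ι}
    {v : Bool} (h : Spills (N.alice x) (N.bob y) E v) :
    Spills ((N.relabel σ).alice x) ((N.relabel σ).bob y) (E.map σ) v := by
  cases v
  · simp only [Spills, relabel_alice] at h ⊢
    rw [h]
  · obtain ⟨p, hp, hne, hbp⟩ := h
    refine ⟨σ p, ?_, ?_, ?_⟩ <;> simp [hp, hbp]
    exact fun h => hne (Option.map_injective σ.injective (by simpa [hp] using h))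

theorem Computes.relabel {N : Network X Y ι} {f : X → Y → Bool} (hN : N.Computes f)
    (σ : ι ≃ κ) : (N.relabel σ).Computes f := fun x y => by
  obtain ⟨E, hE, hspill⟩ := hN x y
  exact ⟨E.map σ, hE.lift (Option.map σ) fun _ _ h => N.step_relabel σ h,
    N.spills_relabel σ hspill⟩

end Network

section Protocol

variable {X Y : Type*} {m : ℕ}

def Protocol.toNetwork (P : Protocol X Y m) : Network X Y (Fin m) :=
  ⟨P.alice, P.bob, P.alice_inv, P.bob_inv⟩

def Network.toProtocol (N : Network X Y (Fin m)) : Protocol X Y m :=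
  ⟨N.alice, N.bob, N.alice_inv, N.bob_inv⟩

theorem Protocol.computes_iff (P : Protocol X Y m) (f : X → Y → Bool) :
    P.Computes f ↔ P.toNetwork.Computes f := by
  refine forall₂_congr fun x y => ?_
  obtain ⟨E, hE, hspill⟩ := exists_reaches_spills_walk (P.alice_inv x) (P.bob_inv y)
  refine ⟨fun h => ⟨E, hE, h ▸ hspill⟩, fun ⟨E', hE', hspill'⟩ => ?_⟩
  exact Spills.unique_of_reaches hE hspill hE' hspill'

theorem Network.Computes.gh_le [Fintype X] [Fintype Y] {ι : Type*} [Fintype ι]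
    {N : Network X Y ι} {f : X → Y → Bool} (hN : N.Computes f) : GH f ≤ Fintype.card ι := by
  let P := (N.relabel (Fintype.equivFin ι)).toProtocol
  exact Nat.sInf_le ⟨P, (P.computes_iff f).mpr (hN.relabel _)⟩

def trivialNetwork [DecidableEq X] (f : X → Y → Bool) : Network X Y (X ⊕ X) where
  alice x := Equiv.swap none (some (.inl x))
  bob y := Sum.elim (fun x => if f x y then .inl x else .inr x)
    (fun x => if f x y then .inr x else .inl x)
  alice_inv x := Equiv.swap_apply_self _ _
  bob_inv y p := by rcases p with x | x <;> by_cases h : f x y <;> simp [h]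

theorem trivialNetwork_computes [DecidableEq X] (f : X → Y → Bool) :
    (trivialNetwork f).Computes f := by
  intro x y
  cases h : f x y
  · refine ⟨some (.inr x), .single ⟨.inl x, by simp [trivialNetwork], by simp [trivialNetwork],
      by simp [trivialNetwork, h], by simp [trivialNetwork, h]⟩, ?_⟩
    simp [Spills, trivialNetwork, Equiv.swap_apply_of_ne_of_ne]
  · exact ⟨none, .refl, .inl x, by simp [trivialNetwork], by simp [trivialNetwork],
      by simp [trivialNetwork, h]⟩

theorem exists_network_computes_gh [Fintype X] [Fintype Y] (f : X → Y → Bool) :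
    ∃ N : Network X Y (Fin (GH f)), N.Computes f := by
  classical
  obtain ⟨P, hP⟩ := Nat.sInf_mem (s := {m | ∃ P : Protocol X Y m, P.Computes f})
    ⟨_, ((trivialNetwork f).relabel (Fintype.equivFin _)).toProtocol,
      (Protocol.computes_iff _ f).mpr ((trivialNetwork_computes f).relabel _)⟩
  exact ⟨P.toNetwork, (P.computes_iff f).mp hP⟩

end Protocol

theorem involutive_swap_comp {α : Type*} [DecidableEq α] {f : α → α} (hf : Involutive f)
    {u v : α} (hu : f u = u) (hv : f v = v) : Involutive (Equiv.swap u v ∘ f) := by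
  have hcomm : ∀ z, f (Equiv.swap u v z) = Equiv.swap u v (f z) := by
    intro z
    rcases eq_or_ne z u with rfl | hzu
    · simp [hu, hv]
    rcases eq_or_ne z v with rfl | hzv
    · simp [hu, hv]
    rw [Equiv.swap_apply_of_ne_of_ne hzu hzv, Equiv.swap_apply_of_ne_of_ne]
    exacts [fun h => hzu (by rw [← hf z, h, hu]), fun h => hzv (by rw [← hf z, h, hv])]
  intro z
  simp [hcomm, hf z]

/-- The water ends at Alice's end `port x (g x y)` instead of spilling on the side given by
`g x y`. Turning this into a protocol for `g` needs a pipe left open by both players: `spare`. -/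
structure PortNetwork (X Y ι : Type*) (g : X → Y → Bool) extends Network X Y ι where
  port : X → Bool → Option ι
  spare : Option ι
  alice_port : ∀ x c, alice x (port x c) = port x c
  port_ne : ∀ x y, g x y = true → port x false ≠ port x true
  alice_spare : ∀ x, ∀ s ∈ spare, alice x (some s) = some s
  bob_spare : ∀ y, ∀ s ∈ spare, bob y s = s
  port_ne_spare : ∀ x c, ∀ s ∈ spare, port x c ≠ some s
  isSome_spare : ∀ x y, g x y = true → spare.isSome
  reaches : ∀ x y, ReflTransGen (Step (alice x) (bob y)) none (port x (g x y))

namespace PortNetwork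

open Classical

variable {X Y ι : Type*} {g : X → Y → Bool}

def empty : PortNetwork X Y Empty (fun _ _ => false) where
  alice _ := id
  bob _ := id
  alice_inv _ _ := rfl
  bob_inv _ _ := rfl
  port _ _ := none
  spare := none
  alice_port _ _ := rfl
  port_ne _ _ := nofun
  alice_spare _ _ := nofun
  bob_spare _ _ := nofun
  port_ne_spare _ _ _ := nofun
  isSome_spare _ _ := nofun
  reaches _ _ := .refl

theorem alice_ne_port (M : PortNetwork X Y ι g) {x : X} {e : Option ι} (he : M.alice x e ≠ e)
    (c : Bool) : M.alice x e ≠ M.port x c := fun h =>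
  he (by rw [h, ← M.alice_port x c, ← h, M.alice_inv])

noncomputable def close (M : PortNetwork X Y ι g) : Network X Y ι where
  alice x := match M.spare with
    | some s => if M.port x true = M.port x false then M.alice x
        else Equiv.swap (M.port x true) (some s) ∘ M.alice x
    | none => M.alice x
  bob := M.bob
  alice_inv x := by
    rcases hs : M.spare with _ | s
    · exact M.alice_inv x
    · dsimp only
      split_ifs
      · exact M.alice_inv x
      · exact involutive_swap_comp (M.alice_inv x) (M.alice_port x true) (M.alice_spare x s hs)
  bob_inv := M.bob_inv

theorem close_alice_of_ne (M : PortNetwork X Y ι g) {x : X} {e : Option ι}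
    (he : M.alice x e ≠ e) : M.close.alice x e = M.alice x e := by
  rcases hs : M.spare with _ | s
  · simp [close, hs]
  · have hspare : M.alice x e ≠ some s := fun h =>
      he (by rw [h, ← M.alice_spare x s hs, ← h, M.alice_inv])
    by_cases hp : M.port x true = M.port x false
    · simp [close, hs, hp]
    · simp [close, hs, hp, Equiv.swap_apply_of_ne_of_ne (M.alice_ne_port he true) hspare]

theorem close_computes (M : PortNetwork X Y ι g) : M.close.Computes g := by
  intro x y
  refine ⟨M.port x (g x y), ReflTransGen.mono (fun _ _ => Step.of_agree
    fun _ => M.close_alice_of_ne) _ _ (M.reaches x y), ?_⟩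
  cases hg : g x y
  · show M.close.alice x _ = _
    rcases hs : M.spare with _ | s
    · simp [close, hs, M.alice_port]
    · have := M.port_ne_spare x false s hs
      by_cases hp : M.port x true = M.port x false
      · simp [close, hs, hp, M.alice_port]
      · simp [close, hs, hp, M.alice_port, Equiv.swap_apply_of_ne_of_ne (Ne.symm hp) this]
  · obtain ⟨s, hs⟩ := Option.isSome_iff_exists.mp (M.isSome_spare x y hg)
    have hne := M.port_ne x y hg
    have hval : M.close.alice x (M.port x true) = some s := by
      simp [close, hs, Ne.symm hne, M.alice_port]
    exact ⟨s, hval, hval ▸ (M.port_ne_spare x true s hs).symm, M.bob_spare y s hs⟩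

variable {κ : Type*} (M : PortNetwork X Y ι g) (Q : Network X Y κ)

/-! Attaching `Q` to `M` adds four copies of the pipes of `Q`. Pipe `(c, false, w)` is pipe `w`
of the forward copy whose tap is the port `port x c` of `M`; pipe `(c, true, w)` is pipe `w` of
the copy run backwards, whose tap end (Alice's end of the pipe `Q` hoses to the tap) is left
open as the new port for parity `c`. Without a spare pipe in `M` the parity `g` is always
`false`: the forward copy for `true` is then not `Live`, and stays open on both sides. -/

def Live (c : Bool) : Prop := c = false ∨ M.spare.isSome

def Entry (x : X) (c : Bool) : Prop :=
  c = false ∨ (M.spare.isSome ∧ M.port x true ≠ M.port x false)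

abbrev old (u : Option ι) : Option (ι ⊕ Bool × Bool × κ) := u.map Sum.inl

abbrev fwd (c : Bool) (w : κ) : Option (ι ⊕ Bool × Bool × κ) := some (.inr (c, false, w))

abbrev bwd (c : Bool) (w : κ) : Option (ι ⊕ Bool × Bool × κ) := some (.inr (c, true, w))

noncomputable def attachBob (y : Y) : ι ⊕ Bool × Bool × κ → ι ⊕ Bool × Bool × κ
  | .inl p => .inl (M.bob y p)
  | .inr (c, false, w) =>
    if M.Live c then
      if Q.bob y w = w then .inr (!c, true, w) else .inr (c, false, Q.bob y w)
    else .inr (c, false, w)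
  | .inr (c, true, w) =>
    if Q.bob y w = w then
      if M.Live (!c) then .inr (!c, false, w) else .inr (c, true, w)
    else .inr (c, true, Q.bob y w)

noncomputable def attachAliceOld (x : X) (u : Option ι) : Option (ι ⊕ Bool × Bool × κ) :=
  match Q.alice x none with
  | some p₁ =>
    if u = M.port x false then fwd false p₁
    else if M.Entry x true ∧ u = M.port x true then fwd true p₁
    else old (M.alice x u)
  | none => old (M.alice x u)

noncomputable def attachAlice (x : X) :
    Option (ι ⊕ Bool × Bool × κ) → Option (ι ⊕ Bool × Bool × κ)
  | none => M.attachAliceOld Q x none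
  | some (.inl p) => M.attachAliceOld Q x (some p)
  | some (.inr (c, false, w)) =>
    if M.Live c then
      match Q.alice x (some w) with
      | none => if M.Entry x c then old (M.port x c) else fwd c w
      | some q => if q = w then bwd c w else fwd c q
    else fwd c w
  | some (.inr (c, true, w)) =>
    match Q.alice x (some w) with
    | none => bwd c w
    | some q => if q = w then (if M.Live c then fwd c w else bwd c w) else bwd c q

variable {M Q}

theorem Entry.live {x : X} {c : Bool} (h : M.Entry x c) : M.Live c :=
  h.imp_right And.left

@[simp] theorem entry_false (x : X) : M.Entry x false := Or.inl rfl

theorem attachAlice_old (x : X) (u : Option ι) :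
    M.attachAlice Q x (old u) = M.attachAliceOld Q x u := by
  cases u <;> rfl

theorem attachAliceOld_of_ne_port {x : X} {u : Option ι} (hport : ∀ c, u ≠ M.port x c) :
    M.attachAliceOld Q x u = old (M.alice x u) := by
  unfold attachAliceOld
  split <;> simp [hport]

theorem attachAliceOld_of_ne {x : X} {u : Option ι} (hu : M.alice x u ≠ u) :
    M.attachAliceOld Q x u = old (M.alice x u) :=
  attachAliceOld_of_ne_port fun c h => hu (h ▸ M.alice_port x c)

theorem attachBob_involutive (y : Y) : Involutive (M.attachBob Q y) := by
  rintro (p | ⟨c, _ | _, w⟩)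
  · simp [attachBob, M.bob_inv y p]
  all_goals
    have := Q.bob_inv y w
    by_cases hw : Q.bob y w = w <;> by_cases hc : M.Live c <;> by_cases hc' : M.Live (!c) <;>
      simp_all [attachBob, eq_comm (a := w)]

section AliceValues

variable {x : X} {c : Bool} {w q : κ}

theorem attachAlice_fwd_of_not_live (hc : ¬M.Live c) :
    M.attachAlice Q x (fwd c w) = fwd c w := by
  simp [attachAlice, hc]

theorem attachAlice_fwd_entry (hq : Q.alice x (some w) = none) (he : M.Entry x c) :
    M.attachAlice Q x (fwd c w) = old (M.port x c) := by
  simp [attachAlice, hq, he, he.live]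

theorem attachAlice_fwd_of_not_entry (hq : Q.alice x (some w) = none) (he : ¬M.Entry x c) :
    M.attachAlice Q x (fwd c w) = fwd c w := by
  simp [attachAlice, hq, he]

theorem attachAlice_fwd_cross (hc : M.Live c) (hq : Q.alice x (some w) = some w) :
    M.attachAlice Q x (fwd c w) = bwd c w := by
  simp [attachAlice, hq, hc]

theorem attachAlice_fwd_of_ne (hc : M.Live c) (hq : Q.alice x (some w) = some q) (hqw : q ≠ w) :
    M.attachAlice Q x (fwd c w) = fwd c q := by
  simp [attachAlice, hq, hc, hqw]

theorem attachAlice_bwd_port (hq : Q.alice x (some w) = none) :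
    M.attachAlice Q x (bwd c w) = bwd c w := by
  simp [attachAlice, hq]

theorem attachAlice_bwd_cross (hq : Q.alice x (some w) = some w) (hc : M.Live c) :
    M.attachAlice Q x (bwd c w) = fwd c w := by
  simp [attachAlice, hq, hc]

theorem attachAlice_bwd_of_not_live (hq : Q.alice x (some w) = some w) (hc : ¬M.Live c) :
    M.attachAlice Q x (bwd c w) = bwd c w := by
  simp [attachAlice, hq, hc]

theorem attachAlice_bwd_of_ne (hq : Q.alice x (some w) = some q) (hqw : q ≠ w) :
    M.attachAlice Q x (bwd c w) = bwd c q := by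
  simp [attachAlice, hq, hqw]

theorem attachAlice_port {p₁ : κ} (hx : Q.alice x none = some p₁) (he : M.Entry x c) :
    M.attachAlice Q x (old (M.port x c)) = fwd c p₁ := by
  rw [attachAlice_old]
  cases c
  · simp [attachAliceOld, hx]
  · obtain ⟨hs, hne⟩ := he.resolve_left Bool.noConfusion
    simp [attachAliceOld, hx, hne, hs, Entry]

end AliceValues

theorem attachAlice_attachAlice_old (x : X) (u : Option ι) :
    M.attachAlice Q x (M.attachAlice Q x (old u)) = old u := by
  rcases hx : Q.alice x none with _ | p₁
  · simp [attachAlice_old, attachAliceOld, hx, M.alice_inv x u]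
  have hp₁ : Q.alice x (some p₁) = none := ((Q.alice_inv x).eq_iff.mp hx).symm
  by_cases h0 : u = M.port x false
  · rw [h0, attachAlice_port hx (entry_false x), attachAlice_fwd_entry hp₁ (entry_false x)]
  by_cases h1 : M.Entry x true ∧ u = M.port x true
  · rw [h1.2, attachAlice_port hx h1.1, attachAlice_fwd_entry hp₁ h1.1]
  have hu : M.attachAlice Q x (old u) = old (M.alice x u) := by
    simp [attachAlice_old, attachAliceOld, hx, h0, h1]
  rw [hu]
  by_cases hfix : M.alice x u = u
  · rw [hfix, hu, hfix]
  · rw [attachAlice_old, attachAliceOld_of_ne (by rwa [M.alice_inv, ne_comm]), M.alice_inv]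

theorem attachAlice_involutive (x : X) : Involutive (M.attachAlice Q x) := by
  rintro (_ | p | ⟨c, _ | _, w⟩)
  · exact attachAlice_attachAlice_old x none
  · exact attachAlice_attachAlice_old x (some p)
  · by_cases hc : M.Live c
    swap
    · rw [attachAlice_fwd_of_not_live hc, attachAlice_fwd_of_not_live hc]
    rcases hq : Q.alice x (some w) with _ | q
    · by_cases he : M.Entry x c
      · rw [attachAlice_fwd_entry hq he, attachAlice_port ((Q.alice_inv x).eq_iff.mp hq).symm he]
      · rw [attachAlice_fwd_of_not_entry hq he, attachAlice_fwd_of_not_entry hq he]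
    by_cases hqw : q = w
    · subst hqw
      rw [attachAlice_fwd_cross hc hq, attachAlice_bwd_cross hq hc]
    · rw [attachAlice_fwd_of_ne hc hq hqw, attachAlice_fwd_of_ne hc ((Q.alice_inv x).eq_iff.mp hq).symm (Ne.symm hqw)]
  · rcases hq : Q.alice x (some w) with _ | q
    · rw [attachAlice_bwd_port hq, attachAlice_bwd_port hq]
    by_cases hqw : q = w
    · subst hqw
      by_cases hc : M.Live c
      · rw [attachAlice_bwd_cross hq hc, attachAlice_fwd_cross hc hq]
      · rw [attachAlice_bwd_of_not_live hq hc, attachAlice_bwd_of_not_live hq hc]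
    · rw [attachAlice_bwd_of_ne hq hqw, attachAlice_bwd_of_ne ((Q.alice_inv x).eq_iff.mp hq).symm (Ne.symm hqw)]

section BobValues

variable {y : Y} {c : Bool} {w : κ}

theorem attachBob_fwd_of_ne (hc : M.Live c) (hw : Q.bob y w ≠ w) :
    M.attachBob Q y (.inr (c, false, w)) = .inr (c, false, Q.bob y w) := by
  simp [attachBob, hc, hw]

theorem attachBob_fwd_cross (hc : M.Live c) (hw : Q.bob y w = w) :
    M.attachBob Q y (.inr (c, false, w)) = .inr (!c, true, w) := by
  simp [attachBob, hc, hw]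

theorem attachBob_fwd_of_not_live (hc : ¬M.Live c) :
    M.attachBob Q y (.inr (c, false, w)) = .inr (c, false, w) := by
  simp [attachBob, hc]

theorem attachBob_bwd_of_ne (hw : Q.bob y w ≠ w) :
    M.attachBob Q y (.inr (c, true, w)) = .inr (c, true, Q.bob y w) := by
  simp [attachBob, hw]

end BobValues

variable (M) in
/-- The forward copy for parity `c`, with the tap of `Q` at the port `port x c`. -/
def fwdEnd (x : X) (c : Bool) : Option κ → Option (ι ⊕ Bool × Bool × κ)
  | none => old (M.port x c)
  | some w => fwd c w

theorem fwdEnd_injective (x : X) (c : Bool) : Injective (M.fwdEnd (κ := κ) x c) := by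
  rintro (_ | _) (_ | _) h <;> simp_all [fwdEnd]

theorem attachAlice_fwdEnd {x : X} {c : Bool} (he : M.Entry x c) {u : Option κ}
    (hne : Q.alice x u ≠ u) (hnone : Q.alice x u ≠ none) :
    M.attachAlice Q x (M.fwdEnd x c u) = M.fwdEnd x c (Q.alice x u) := by
  obtain ⟨q, hq⟩ := Option.ne_none_iff_exists'.mp hnone
  rcases u with _ | w
  · simp [fwdEnd, hq, attachAlice_port hq he]
  · rw [hq] at hne ⊢
    exact attachAlice_fwd_of_ne he.live hq fun h => hne (h ▸ rfl)

theorem step_old {x : X} {y : Y} {e e' : Option ι} (h : Step (M.alice x) (M.bob y) e e') :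
    Step (M.attachAlice Q x) (M.attachBob Q y) (old e) (old e') := by
  obtain ⟨p, hp, hne, hbp, rfl⟩ := h
  have halice : M.attachAlice Q x (old e) = old (M.alice x e) := by
    rw [attachAlice_old, attachAliceOld_of_ne hne]
  refine ⟨.inl p, by simp [halice, hp], ?_, by simpa [attachBob] using hbp, by simp [attachBob]⟩
  rw [halice]
  exact fun h => hne (Option.map_injective Sum.inl_injective h)

theorem step_fwdEnd {x : X} {y : Y} {c : Bool} (he : M.Entry x c) {u u' : Option κ}
    (h : Step (Q.alice x) (Q.bob y) u u') :
    Step (M.attachAlice Q x) (M.attachBob Q y) (M.fwdEnd x c u) (M.fwdEnd x c u') := by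
  obtain ⟨q, hq, hne, hbq, rfl⟩ := h
  have halice := attachAlice_fwdEnd (Q := Q) he hne (by simp [hq])
  rw [hq] at halice
  refine ⟨.inr (c, false, q), halice, ?_, ?_, ?_⟩
  · rw [halice]
    exact (fwdEnd_injective x c).ne (hq ▸ hne)
  · simp [attachBob_fwd_of_ne he.live hbq, hbq]
  · simp [attachBob_fwd_of_ne he.live hbq, fwdEnd]

theorem step_bwd {x : X} {y : Y} {c : Bool} {w w' : κ}
    (h : Step (Q.alice x) (Q.bob y) (some w) (some w')) :
    Step (M.attachAlice Q x) (M.attachBob Q y) (bwd c w) (bwd c w') := by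
  obtain ⟨q, hq, hne, hbq, hw'⟩ := h
  have hqw : q ≠ w := fun h => hne (h ▸ hq)
  refine ⟨.inr (c, true, q), attachAlice_bwd_of_ne hq hqw, ?_, ?_, ?_⟩
  · simp [attachAlice_bwd_of_ne hq hqw, hqw]
  · simp [attachBob_bwd_of_ne hbq, hbq]
  · simp [attachBob_bwd_of_ne hbq, Option.some_inj.mp hw']

theorem reaches_fwdEnd {x : X} {y : Y} {c : Bool} (he : M.Entry x c) {E : Option κ}
    (h : ReflTransGen (Step (Q.alice x) (Q.bob y)) none E) :
    ReflTransGen (Step (M.attachAlice Q x) (M.attachBob Q y)) (old (M.port x c))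
      (M.fwdEnd x c E) :=
  h.lift (M.fwdEnd x c) fun _ _ => step_fwdEnd he

theorem reaches_bwd {x : X} {y : Y} {c : Bool} {u v : Option κ}
    (h : ReflTransGen (Step (Q.alice x) (Q.bob y)) u v) (hu : u ≠ none) :
    ReflTransGen (Step (M.attachAlice Q x) (M.attachBob Q y)) (u.bind (bwd c))
      (v.bind (bwd c)) := by
  induction h using ReflTransGen.head_induction_on with
  | refl => exact .refl
  | head hs _ ih =>
    obtain ⟨w, rfl⟩ := Option.ne_none_iff_exists'.mp hu
    obtain ⟨q, -, -, -, rfl⟩ := id hs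
    exact .head (step_bwd hs) (ih (by simp))

variable (M Q) in
def attachPort (x : X) (c : Bool) : Option (ι ⊕ Bool × Bool × κ) :=
  match Q.alice x none with
  | some p₁ => bwd c p₁
  | none => old (M.port x c)

variable (M) in
/-- Without a spare pipe in `M`, the unused forward copy for parity `true` supplies one. -/
noncomputable def attachSpare : Option (ι ⊕ Bool × Bool × κ) :=
  match M.spare with
  | some s => old (some s)
  | none => if h : Nonempty κ then fwd true h.some else none

theorem attachAlice_attachPort (x : X) (c : Bool) :
    M.attachAlice Q x (M.attachPort Q x c) = M.attachPort Q x c := by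
  rcases hx : Q.alice x none with _ | p₁
  · simp [attachPort, hx, attachAlice_old, attachAliceOld, M.alice_port]
  · simp only [attachPort, hx]
    exact attachAlice_bwd_port ((Q.alice_inv x).eq_iff.mp hx).symm

theorem attachPort_ne {f : X → Y → Bool} (hQ : Q.Computes f) {x : X} {y : Y}
    (h : xor (g x y) (f x y) = true) : M.attachPort Q x false ≠ M.attachPort Q x true := by
  rcases hx : Q.alice x none with _ | p₁
  · rw [hQ.eq_false_of_alice_none hx y, Bool.xor_false] at h
    simp only [attachPort, hx]
    exact (Option.map_injective Sum.inl_injective).ne (M.port_ne x y h)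
  · simp [attachPort, hx]

theorem attachAlice_attachSpare (x : X) :
    ∀ s ∈ M.attachSpare, M.attachAlice Q x (some s) = some s := by
  intro s hs
  rcases hM : M.spare with _ | s₀ <;> simp only [attachSpare, hM] at hs
  · split_ifs at hs <;> cases hs
    exact attachAlice_fwd_of_not_live (by simp [Live, hM])
  · cases hs
    rw [show some (Sum.inl s₀) = old (some s₀) from rfl, attachAlice_old,
      attachAliceOld_of_ne_port fun c => (M.port_ne_spare x c s₀ hM).symm, M.alice_spare x s₀ hM]

theorem attachBob_attachSpare (y : Y) : ∀ s ∈ M.attachSpare, M.attachBob Q y s = s := by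
  intro s hs
  rcases hM : M.spare with _ | s₀ <;> simp only [attachSpare, hM] at hs
  · split_ifs at hs <;> cases hs
    exact attachBob_fwd_of_not_live (by simp [Live, hM])
  · cases hs
    simp [attachBob, M.bob_spare y s₀ hM]

theorem attachPort_ne_attachSpare (x : X) (c : Bool) :
    ∀ s ∈ M.attachSpare, M.attachPort Q x c ≠ some s := by
  intro s hs
  rcases hM : M.spare with _ | s₀ <;> simp only [attachSpare, hM] at hs
  · split_ifs at hs <;> cases hs
    unfold attachPort
    split <;> simp
  · cases hs
    unfold attachPort
    split <;> simp [M.port_ne_spare x c s₀ hM]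

theorem isSome_attachSpare {f : X → Y → Bool} (hQ : Q.Computes f) {x : X} {y : Y}
    (h : xor (g x y) (f x y) = true) : (M.attachSpare (κ := κ)).isSome := by
  rcases hM : M.spare with _ | s₀
  · have hg : g x y = false := by simpa [hM] using mt (M.isSome_spare x y)
    rw [hg, Bool.false_xor] at h
    obtain ⟨p₁, -⟩ : ∃ p₁, Q.alice x none = some p₁ := Option.ne_none_iff_exists'.mp fun hx => by
      simp [hQ.eq_false_of_alice_none hx y] at h
    simp [attachSpare, hM, Nonempty.intro p₁]
  · simp [attachSpare, hM]

theorem step_fwd_cross {x : X} {y : Y} {c : Bool} {s : κ} (hc : M.Live c)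
    (hs : Q.alice x (some s) = some s) (hbs : Q.bob y s ≠ s) :
    Step (M.attachAlice Q x) (M.attachBob Q y) (fwd c s) (bwd c (Q.bob y s)) := by
  refine ⟨.inr (c, true, s), attachAlice_fwd_cross hc hs, ?_, ?_, ?_⟩ <;>
    simp [attachAlice_fwd_cross hc hs, attachBob_bwd_of_ne hbs, hbs]

theorem step_fwdEnd_cross {x : X} {y : Y} {c : Bool} (he : M.Entry x c) {E : Option κ} {p : κ}
    (hp : Q.alice x E = some p) (hne : Q.alice x E ≠ E) (hbp : Q.bob y p = p) :
    Step (M.attachAlice Q x) (M.attachBob Q y) (M.fwdEnd x c E) (bwd (!c) p) := by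
  have halice := attachAlice_fwdEnd (Q := Q) he hne (by simp [hp])
  rw [hp] at halice
  refine ⟨.inr (c, false, p), halice, ?_, ?_, ?_⟩
  · rw [halice]
    exact (fwdEnd_injective x c).ne (hp ▸ hne)
  all_goals simp [attachBob_fwd_cross he.live hbp]

theorem reaches_gadget {f : X → Y → Bool} (hQ : Q.Computes f) {x : X} {y : Y} {c : Bool}
    (he : M.Entry x c) {p₁ : κ} (hx : Q.alice x none = some p₁) :
    ReflTransGen (Step (M.attachAlice Q x) (M.attachBob Q y)) (old (M.port x c))
      (bwd (xor c (f x y)) p₁) := by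
  obtain ⟨E, hE, hspill⟩ := hQ x y
  have hfwd := reaches_fwdEnd he hE
  cases hf : f x y <;> rw [hf] at hspill
  · obtain ⟨s, rfl⟩ : ∃ s, E = some s :=
      Option.ne_none_iff_exists'.mp fun h => by
        rw [h] at hspill
        exact Option.some_ne_none p₁ (hx.symm.trans hspill)
    obtain ⟨u, hu, pt, hpt, hne, hbpt, hs⟩ := hE.cases_tail.resolve_left nofun
    obtain rfl := Option.some_inj.mp hs
    have hback := reaches_bwd (c := c) (M := M)
      (reflTransGen_step_symm (Q.alice_inv x) (Q.bob_inv y) hu hne) (by simp [hpt])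
    rw [hpt, hx] at hback
    refine (hfwd.tail (step_fwd_cross he.live hspill ?_)).trans ?_
    · rwa [Q.bob_inv, ne_comm]
    · rw [Q.bob_inv, Bool.xor_false]
      simpa using hback
  · obtain ⟨p, hp, hne, hbp⟩ := hspill
    have hback := reaches_bwd (c := !c) (M := M)
      (reflTransGen_step_symm (Q.alice_inv x) (Q.bob_inv y) hE hne) (by simp [hp])
    rw [hp, hx] at hback
    simpa using (hfwd.tail (step_fwdEnd_cross he hp hne hbp)).trans hback

theorem attach_reaches {f : X → Y → Bool} (hQ : Q.Computes f) (x : X) (y : Y) :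
    ReflTransGen (Step (M.attachAlice Q x) (M.attachBob Q y)) none
      (M.attachPort Q x (xor (g x y) (f x y))) := by
  have hold : ReflTransGen (Step (M.attachAlice Q x) (M.attachBob Q y)) none
      (old (M.port x (g x y))) :=
    (M.reaches x y).lift old fun _ _ => step_old
  rcases hx : Q.alice x none with _ | p₁
  · rw [hQ.eq_false_of_alice_none hx y, Bool.xor_false]
    simpa [attachPort, hx] using hold
  · have he : M.Entry x (g x y) := by
      cases hg : g x y
      · exact entry_false x
      · exact Or.inr ⟨M.isSome_spare x y hg, (M.port_ne x y hg).symm⟩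
    simpa [attachPort, hx] using hold.trans (reaches_gadget hQ he hx)

variable (M) in
noncomputable def attach {f : X → Y → Bool} (hQ : Q.Computes f) :
    PortNetwork X Y (ι ⊕ Bool × Bool × κ) (fun x y => xor (g x y) (f x y)) where
  alice := M.attachAlice Q
  bob := M.attachBob Q
  alice_inv := attachAlice_involutive
  bob_inv := attachBob_involutive
  port := M.attachPort Q
  spare := M.attachSpare
  alice_port := attachAlice_attachPort
  port_ne _ _ := attachPort_ne hQ
  alice_spare := attachAlice_attachSpare
  bob_spare := attachBob_attachSpare
  port_ne_spare := attachPort_ne_attachSpare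
  isSome_spare _ _ := isSome_attachSpare hQ
  reaches := attach_reaches hQ

end PortNetwork

theorem exists_portNetwork_foldr_xor {X Y : Type*} [Fintype X] [Fintype Y] {k : ℕ}
    (fs : Fin k → X → Y → Bool) :
    ∃ (ι : Type) (_ : Fintype ι)
      (_ : PortNetwork X Y ι fun x y => (List.ofFn fun i => fs i x y).foldr Bool.xor false),
      Fintype.card ι ≤ 4 * ∑ i, GH (fs i) := by
  induction k with
  | zero => exact ⟨Empty, inferInstance, by simpa using PortNetwork.empty, by simp⟩
  | succ k ih =>
    obtain ⟨ι, _, M, hM⟩ := ih fun i => fs i.succ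
    obtain ⟨Q, hQ⟩ := exists_network_computes_gh (fs 0)
    have hxor : (fun x y => (List.ofFn fun i => fs i x y).foldr Bool.xor false) =
        fun x y => xor ((List.ofFn fun i => fs i.succ x y).foldr Bool.xor false) (fs 0 x y) := by
      funext x y
      simp [List.ofFn_succ, Bool.xor_comm]
    refine ⟨_, inferInstance, hxor ▸ M.attach hQ, ?_⟩
    simp only [Fintype.card_sum, Fintype.card_prod, Fintype.card_bool, Fintype.card_fin,
      Fin.sum_univ_succ]
    omega

/-- Garden-hose parity composition: the garden-hose complexity of the
XOR of Boolean functions satisfies `GH(⊕ᵢ fᵢ) ≤ 4 ∑ᵢ GH(fᵢ)`. -/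
theorem gh_xor_le {X Y : Type*} [Fintype X] [Fintype Y] {k : ℕ}
    (fs : Fin k → X → Y → Bool) :
    GH (fun x y => (List.ofFn fun i => fs i x y).foldr Bool.xor false)
      ≤ 4 * ∑ i, GH (fs i) := by
  obtain ⟨ι, _, M, hM⟩ := exists_portNetwork_foldr_xor fs
  exact M.close_computes.gh_le.trans hM

end GardenHose
end

section
/- Robustness-of-entanglement lower bound: if a resource state ρ achieves success probability at least 1−γ on the n-fold parallel-repeated δ-relaxed BB84 measurement NLQC, while every separable state achieves success probability at most (2^{h(δ)} β)^n with β = cos²(π/8), then the log-robustness of entanglement satisfies r(ρ) ≥ n·(−log(2^{h(δ)} β)) + log(1−γ). -/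
open scoped BigOperators ComplexOrder Matrix Kronecker

noncomputable section

namespace QI

/-- The binary entropy function (base 2). -/
def binEntropy (x : ℝ) : ℝ :=
  -(x * Real.logb 2 x) - (1 - x) * Real.logb 2 (1 - x)

/-- A bipartite state is separable if it is a convex combination of product states. -/
def Separable {L R : Type*} [Fintype L] [Fintype R]
    (ρ : Matrix (L × R) (L × R) ℂ) : Prop :=
  ∃ (k : ℕ) (p : Fin k → ℝ) (ρL : Fin k → Matrix L L ℂ) (ρR : Fin k → Matrix R R ℂ),
    (∀ i, 0 ≤ p i) ∧ (∑ i, p i = 1) ∧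
    (∀ i, (ρL i).PosSemidef) ∧ (∀ i, (ρL i).trace = 1) ∧
    (∀ i, (ρR i).PosSemidef) ∧ (∀ i, (ρR i).trace = 1) ∧
    ρ = ∑ i, (p i : ℂ) • (ρL i ⊗ₖ ρR i)

/-- The robustness of entanglement: the least `s ≥ 0` such that mixing `ρ` with weight
`1/(1+s)` against some separable state with weight `s/(1+s)` yields a separable
state. -/
def robustness {L R : Type*} [Fintype L] [Fintype R]
    (ρ : Matrix (L × R) (L × R) ℂ) : ℝ :=
  sInf {s : ℝ | 0 ≤ s ∧ ∃ σ : Matrix (L × R) (L × R) ℂ, Separable σ ∧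
    Separable (((1 + s : ℝ) : ℂ)⁻¹ • ρ + ((s : ℂ) / ((1 + s : ℝ) : ℂ)) • σ)}

/-- The log-robustness of entanglement `r(ρ) = log₂ (R(ρ) + 1)`. -/
def logRobustness {L R : Type*} [Fintype L] [Fintype R]
    (ρ : Matrix (L × R) (L × R) ℂ) : ℝ :=
  Real.logb 2 (robustness ρ + 1)

end QI

/-!
If `(ρ + sσ)/(1 + s)` is separable, playing the optimal strategy for `ρ` on this mixture wins
with probability at least `psuc ρ / (1 + s)`, while separability caps it by
`β = (2^{h(δ)} cos²(π/8))ⁿ`; hence `1 + s ≥ psuc ρ / β` for every admissible `s`, and taking the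
infimum and `log₂` gives the bound.

The set of admissible `s` is nonempty, which matters since `sInf ∅ = 0`: positive semidefinite
matrices span all matrices, so products of density matrices span the matrices on `L × R`, and a
Hermitian trace-one `ρ` is a real affine combination `∑ cᵢ Aᵢ ⊗ Bᵢ` of product states;
`s = ∑ cᵢ⁻` is then admissible.
-/

section

open Matrix Submodule

def Matrix.densityMatrices (T : Type*) [Fintype T] : Set (Matrix T T ℂ) :=
  {A | A.PosSemidef ∧ A.trace = 1}

lemma Matrix.span_posSemidef_eq_top (T : Type*) [Fintype T] [DecidableEq T] :
    span ℂ {A : Matrix T T ℂ | A.PosSemidef} = ⊤ := by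
  open scoped Matrix.Norms.L2Operator MatrixOrder in
  simpa only [Matrix.nonneg_iff_posSemidef] using CStarAlgebra.span_nonneg (A := Matrix T T ℂ)

lemma Matrix.PosSemidef.mem_span_densityMatrices {T : Type*} [Fintype T] {A : Matrix T T ℂ}
    (hA : A.PosSemidef) : A ∈ span ℂ (densityMatrices T) := by
  by_cases h0 : A.trace = 0
  · simp [hA.trace_eq_zero_iff.mp h0]
  · have hnorm : A.trace⁻¹ • A ∈ densityMatrices T :=
      ⟨hA.smul (inv_nonneg.mpr hA.trace_nonneg),
        by rw [trace_smul, smul_eq_mul, inv_mul_cancel₀ h0]⟩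
    simpa [smul_smul, mul_inv_cancel₀ h0] using Submodule.smul_mem _ A.trace (subset_span hnorm)

lemma Matrix.span_densityMatrices_eq_top (T : Type*) [Fintype T] [DecidableEq T] :
    span ℂ (densityMatrices T) = ⊤ :=
  eq_top_iff.mpr <| span_posSemidef_eq_top T ▸ span_le.mpr fun _ hA => hA.mem_span_densityMatrices

lemma Matrix.span_image2_kronecker_eq_top {K L R : Type*} [CommSemiring K] [Fintype L]
    [Fintype R] [DecidableEq L] [DecidableEq R] {S : Set (Matrix L L K)} {T : Set (Matrix R R K)}
    (hS : span K S = ⊤) (hT : span K T = ⊤) :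
    span K (Set.image2 (· ⊗ₖ ·) S T) = ⊤ := by
  have himage : Set.image2 (· ⊗ₖ ·) S T
      = (kroneckerLinearEquiv L L R R K).toLinearMap ''
          Set.image2 (TensorProduct.mk K _ _ · ·) S T := by
    rw [Set.image_image2]; rfl
  rw [himage, ← map_span, ← map₂_span_span, hS, hT, TensorProduct.map₂_mk_top_top_eq_top,
    Submodule.map_top, LinearEquiv.range]

lemma IsSelfAdjoint.eq_sum_re_smul {M ι : Type*} [AddCommGroup M] [Module ℂ M]
    [StarAddMonoid M] [StarModule ℂ M] {x : M} (hx : IsSelfAdjoint x) (s : Finset ι)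
    (z : ι → ℂ) (y : ι → M) (hy : ∀ i, IsSelfAdjoint (y i)) (h : x = ∑ i ∈ s, z i • y i) :
    x = ∑ i ∈ s, ((z i).re : ℂ) • y i := by
  rw [← hx.coe_realPart, h, map_sum]
  push_cast
  refine Finset.sum_congr rfl fun i _ => ?_
  simp [realPart_smul, (hy i).imaginaryPart, (hy i).coe_realPart, Complex.coe_smul]

lemma Matrix.IsHermitian.exists_sum_kronecker_densityMatrices {L R : Type*} [Fintype L]
    [Fintype R] [DecidableEq L] [DecidableEq R] {ρ : Matrix (L × R) (L × R) ℂ}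
    (hρ : ρ.IsHermitian) :
    ∃ (n : ℕ) (c : Fin n → ℝ) (A : Fin n → Matrix L L ℂ) (B : Fin n → Matrix R R ℂ),
      (∀ i, A i ∈ densityMatrices L) ∧ (∀ i, B i ∈ densityMatrices R) ∧
      ρ = ∑ i, (c i : ℂ) • (A i ⊗ₖ B i) := by
  have hmem : ρ ∈ span ℂ (Set.image2 (· ⊗ₖ ·) (densityMatrices L) (densityMatrices R)) := by
    rw [span_image2_kronecker_eq_top (span_densityMatrices_eq_top L)
      (span_densityMatrices_eq_top R)]
    trivial
  obtain ⟨n, z, g, hg⟩ := mem_span_set'.mp hmem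
  choose A hA B hB hAB using fun i => (g i).2
  refine ⟨n, fun i => (z i).re, A, B, hA, hB,
    IsSelfAdjoint.eq_sum_re_smul hρ _ z _ (fun i => ?_) ?_⟩
  · exact ((hA i).1.kronecker (hB i).1).isHermitian
  · simp only [hAB, hg]

end

namespace QI

section

open Matrix

variable {L R : Type*} [Fintype L] [Fintype R]

lemma Separable.posSemidef {σ : Matrix (L × R) (L × R) ℂ} (h : Separable σ) : σ.PosSemidef := by
  obtain ⟨k, p, ρL, ρR, hp, -, hL, -, hR, -, rfl⟩ := h
  exact posSemidef_sum _ fun i _ =>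
    ((hL i).kronecker (hR i)).smul (Complex.zero_le_real.mpr (hp i))

lemma Separable.trace_eq_one {σ : Matrix (L × R) (L × R) ℂ} (h : Separable σ) :
    σ.trace = 1 := by
  obtain ⟨k, p, ρL, ρR, -, hp, -, hL, -, hR, rfl⟩ := h
  simp only [trace_sum, trace_smul, trace_kronecker, hL, hR, mul_one, smul_eq_mul]
  exact_mod_cast hp

lemma separable_sum_smul_kronecker {n : ℕ} (w : Fin n → ℝ) (A : Fin n → Matrix L L ℂ)
    (B : Fin n → Matrix R R ℂ) (hw : ∀ i, 0 ≤ w i) (hw1 : ∑ i, w i = 1)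
    (hA : ∀ i, A i ∈ densityMatrices L) (hB : ∀ i, B i ∈ densityMatrices R) :
    Separable (∑ i, (w i : ℂ) • (A i ⊗ₖ B i)) :=
  ⟨n, w, A, B, hw, hw1, fun i => (hA i).1, fun i => (hA i).2, fun i => (hB i).1,
    fun i => (hB i).2, rfl⟩

def robustnessSet (ρ : Matrix (L × R) (L × R) ℂ) : Set ℝ :=
  {s : ℝ | 0 ≤ s ∧ ∃ σ : Matrix (L × R) (L × R) ℂ, Separable σ ∧
    Separable (((1 + s : ℝ) : ℂ)⁻¹ • ρ + ((s : ℂ) / ((1 + s : ℝ) : ℂ)) • σ)}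

lemma robustness_eq_sInf (ρ : Matrix (L × R) (L × R) ℂ) :
    robustness ρ = sInf (robustnessSet ρ) := rfl

lemma sum_negPart_mem_robustnessSet {n : ℕ} (c : Fin n → ℝ) (A : Fin n → Matrix L L ℂ)
    (B : Fin n → Matrix R R ℂ) (hc : ∑ i, c i = 1)
    (hA : ∀ i, A i ∈ densityMatrices L) (hB : ∀ i, B i ∈ densityMatrices R) :
    ∑ i, (c i)⁻ ∈ robustnessSet (∑ i, (c i : ℂ) • (A i ⊗ₖ B i)) := by
  set t := ∑ i, (c i)⁻
  have ht : 0 ≤ t := Finset.sum_nonneg fun i _ => negPart_nonneg _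
  refine ⟨ht, ?_⟩
  rcases ht.eq_or_lt with ht0 | htpos
  · have hc0 : ∀ i, 0 ≤ c i := fun i => negPart_eq_zero.mp <|
      (Finset.sum_eq_zero_iff_of_nonneg fun i _ => negPart_nonneg _).mp ht0.symm i
        (Finset.mem_univ i)
    have hsep := separable_sum_smul_kronecker c A B hc0 hc hA hB
    refine ⟨_, hsep, ?_⟩
    rw [← ht0]
    simpa using hsep
  have hpos : ∑ i, (c i)⁺ = 1 + t := by
    simp only [t, ← hc, ← Finset.sum_add_distrib, eq_add_of_sub_eq (posPart_sub_negPart _)]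
  refine ⟨_, separable_sum_smul_kronecker (fun i => (c i)⁻ / t) A B
    (fun i => div_nonneg (negPart_nonneg _) ht)
    (by rw [← Finset.sum_div, div_self htpos.ne']) hA hB, ?_⟩
  convert separable_sum_smul_kronecker (fun i => (c i)⁺ / (1 + t)) A B
    (fun i => div_nonneg (posPart_nonneg _) (by positivity))
    (by rw [← Finset.sum_div, hpos, div_self (by positivity)]) hA hB using 1
  simp only [Finset.smul_sum, smul_smul, ← Finset.sum_add_distrib, ← add_smul]
  refine Finset.sum_congr rfl fun i _ => congrArg (· • _) ?_
  rw [eq_add_of_sub_eq (posPart_sub_negPart (c i))]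
  push_cast
  field_simp

variable [DecidableEq L] [DecidableEq R]

lemma robustnessSet_nonempty {ρ : Matrix (L × R) (L × R) ℂ} (hρ : ρ.IsHermitian)
    (htr : ρ.trace = 1) : (robustnessSet ρ).Nonempty := by
  obtain ⟨n, c, A, B, hA, hB, rfl⟩ := hρ.exists_sum_kronecker_densityMatrices
  refine ⟨_, sum_negPart_mem_robustnessSet c A B ?_ hA hB⟩
  simp only [trace_sum, trace_smul, trace_kronecker, (hA _).2, (hB _).2, mul_one,
    smul_eq_mul] at htr
  exact_mod_cast htr

lemma div_le_robustness_add_one (psuc : Matrix (L × R) (L × R) ℂ → ℝ) {b : ℝ} (hb : 0 < b)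
    (hmix : ∀ ρ σ : Matrix (L × R) (L × R) ℂ,
      ρ.PosSemidef → ρ.trace = 1 → σ.PosSemidef → σ.trace = 1 →
      ∀ t : ℝ, 0 ≤ t → t ≤ 1 →
        t * psuc ρ ≤ psuc ((t : ℂ) • ρ + (((1 - t : ℝ)) : ℂ) • σ))
    (hsep : ∀ σ : Matrix (L × R) (L × R) ℂ, Separable σ → psuc σ ≤ b)
    {ρ : Matrix (L × R) (L × R) ℂ} (hρ : ρ.PosSemidef) (htr : ρ.trace = 1) :
    psuc ρ / b ≤ robustness ρ + 1 := by
  rw [robustness_eq_sInf, ← sub_le_iff_le_add]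
  refine le_csInf (robustnessSet_nonempty hρ.1 htr) ?_
  rintro s ⟨hs, σ, hσ, hmixture⟩
  have hweights : (((1 + s)⁻¹ : ℝ) : ℂ) • ρ + ((1 - (1 + s)⁻¹ : ℝ) : ℂ) • σ
      = ((1 + s : ℝ) : ℂ)⁻¹ • ρ + ((s : ℂ) / ((1 + s : ℝ) : ℂ)) • σ := by
    congr 2
    · exact Complex.ofReal_inv _
    · rw [show 1 - (1 + s)⁻¹ = s / (1 + s) by field_simp; ring, Complex.ofReal_div]
  have hpsuc : (1 + s)⁻¹ * psuc ρ ≤ b := by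
    refine (hmix ρ σ hρ htr hσ.posSemidef hσ.trace_eq_one _ (by positivity)
      (inv_le_one_of_one_le₀ (by linarith))).trans ?_
    rw [hweights]
    exact hsep _ hmixture
  rw [inv_mul_le_iff₀ (by positivity), ← div_le_iff₀ hb] at hpsuc
  linarith

end

theorem log_robustness_lower_bound_general
    {L R : Type*} [Fintype L] [Fintype R] [DecidableEq L] [DecidableEq R]
    (n : ℕ) (δ γ : ℝ) (hγ1 : γ < 1)
    (psuc : Matrix (L × R) (L × R) ℂ → ℝ)
    (hmix : ∀ ρ σ : Matrix (L × R) (L × R) ℂ,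
      ρ.PosSemidef → ρ.trace = 1 → σ.PosSemidef → σ.trace = 1 →
      ∀ t : ℝ, 0 ≤ t → t ≤ 1 →
        t * psuc ρ ≤ psuc ((t : ℂ) • ρ + (((1 - t : ℝ)) : ℂ) • σ))
    (hsep : ∀ σ : Matrix (L × R) (L × R) ℂ, Separable σ →
      psuc σ ≤ ((2 : ℝ) ^ binEntropy δ * Real.cos (Real.pi / 8) ^ 2) ^ n)
    (ρ : Matrix (L × R) (L × R) ℂ) (hρ : ρ.PosSemidef) (htr : ρ.trace = 1)
    (hwin : 1 - γ ≤ psuc ρ) :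
    (n : ℝ) * (-Real.logb 2 ((2 : ℝ) ^ binEntropy δ * Real.cos (Real.pi / 8) ^ 2))
        + Real.logb 2 (1 - γ)
      ≤ logRobustness ρ := by
  set β := (2 : ℝ) ^ binEntropy δ * Real.cos (Real.pi / 8) ^ 2
  have hcos : 0 < Real.cos (Real.pi / 8) :=
    Real.cos_pos_of_mem_Ioo ⟨by linarith [Real.pi_pos], by linarith [Real.pi_pos]⟩
  have hβ : 0 < β ^ n := by positivity
  have hγ : 0 < 1 - γ := by linarith
  calc (n : ℝ) * (-Real.logb 2 β) + Real.logb 2 (1 - γ) = Real.logb 2 ((1 - γ) / β ^ n) := by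
        rw [Real.logb_div hγ.ne' hβ.ne', Real.logb_pow]
        ring
    _ ≤ Real.logb 2 (psuc ρ / β ^ n) :=
        Real.logb_le_logb_of_le one_lt_two (by positivity) (by gcongr)
    _ ≤ logRobustness ρ :=
        Real.logb_le_logb_of_le one_lt_two (div_pos (hγ.trans_le hwin) hβ)
          (div_le_robustness_add_one psuc hβ hmix hsep hρ htr)

/-- Robustness-of-entanglement lower bound: if a resource state `ρ`
achieves success probability at least `1 − γ` on the `n`-fold parallel-repeated
`δ`-relaxed BB84 measurement NLQC, while every separable state achieves success
probability at most `(2^{h(δ)} β)^n` with `β = cos²(π/8)`, then the log-robustness of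
entanglement satisfies `r(ρ) ≥ n (−log₂ (2^{h(δ)} β)) + log₂ (1 − γ)`.
(The success probability `psuc` of the task satisfies
`psuc (t ρ + (1-t) σ) ≥ t psuc ρ`, since a valid strategy on the mixture is to play the
optimal strategy for `ρ`.) -/
theorem log_robustness_lower_bound
    {L R : Type*} [Fintype L] [Fintype R] [DecidableEq L] [DecidableEq R]
    (n : ℕ) (δ γ : ℝ) (hδ0 : 0 ≤ δ) (hδ1 : δ ≤ 1) (hγ0 : 0 ≤ γ) (hγ1 : γ < 1)
    (psuc : Matrix (L × R) (L × R) ℂ → ℝ)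
    (hmix : ∀ ρ σ : Matrix (L × R) (L × R) ℂ,
      ρ.PosSemidef → ρ.trace = 1 → σ.PosSemidef → σ.trace = 1 →
      ∀ t : ℝ, 0 ≤ t → t ≤ 1 →
        t * psuc ρ ≤ psuc ((t : ℂ) • ρ + (((1 - t : ℝ)) : ℂ) • σ))
    (hsep : ∀ σ : Matrix (L × R) (L × R) ℂ, Separable σ →
      psuc σ ≤ ((2 : ℝ) ^ binEntropy δ * Real.cos (Real.pi / 8) ^ 2) ^ n)
    (ρ : Matrix (L × R) (L × R) ℂ) (hρ : ρ.PosSemidef) (htr : ρ.trace = 1)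
    (hwin : 1 - γ ≤ psuc ρ) :
    (n : ℝ) * (-Real.logb 2 ((2 : ℝ) ^ binEntropy δ * Real.cos (Real.pi / 8) ^ 2))
        + Real.logb 2 (1 - γ)
      ≤ logRobustness ρ :=
  log_robustness_lower_bound_general n δ γ hγ1 psuc hmix hsep ρ hρ htr hwin

end QI
end
end
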